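/- Let π ∈ ℝⁿ, δ > 0, and take the cost c(u,w) = ‖u − w‖₂². Then inf over probability measures P on ℝⁿ with C(P,Q) ≤ δ of E_P[⟪π, R⟫] equals (1/N) Σ_{i=1}^N ⟪π, Rᵢ⟫ − √δ ‖π‖₂. (Every P with C(P,Q) ≤ δ has finite second moment, so the expectation is well-defined and finite.) -/

import Mathlib

open MeasureTheory
open scoped ENNReal RealInnerProductSpace BigOperators

/-- The optimal transport cost between two measures on `ℝⁿ` with cost function `c`. -/
noncomputable def transportCost {n : ℕ}
    (c : EuclideanSpace ℝ (Fin n) → EuclideanSpace ℝ (Fin n) → ℝ≥0∞)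
    (μ ν : Measure (EuclideanSpace ℝ (Fin n))) : ℝ≥0∞ :=
  ⨅ (γ : Measure (EuclideanSpace ℝ (Fin n) × EuclideanSpace ℝ (Fin n)))
    (_ : γ.map Prod.fst = μ) (_ : γ.map Prod.snd = ν),
    ∫⁻ p, c p.1 p.2 ∂γ

/-- The empirical measure `Q = (1/N) ∑ᵢ δ_{Rᵢ}`. -/
noncomputable def empirical {n N : ℕ} (R : Fin N → EuclideanSpace ℝ (Fin n)) :
    Measure (EuclideanSpace ℝ (Fin n)) :=
  (N : ℝ≥0∞)⁻¹ • ∑ i, Measure.dirac (R i)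

/-! For a coupling `γ` of `P` and `Q`, by Cauchy–Schwarz twice,
`E_Q ⟪π, ·⟫ - E_P ⟪π, ·⟫ = E_γ ⟪π, y - x⟫ ≤ ‖π‖ E_γ ‖x - y‖ ≤ ‖π‖ (E_γ ‖x - y‖²)^(1/2)`,
so every `P` with `C(P, Q) ≤ δ` has `E_P ⟪π, ·⟫ ≥ E_Q ⟪π, ·⟫ - √δ ‖π‖`.
Translating `Q` by a vector `v` with `‖v‖ ≤ √δ` and `⟪π, v⟫ = √δ ‖π‖` costs at most `δ`
and attains the bound. -/

lemma ENNReal.ofReal_sqrt_sq (x : ℝ) : ENNReal.ofReal √x ^ 2 = ENNReal.ofReal x := by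
  rw [← ENNReal.ofReal_pow (Real.sqrt_nonneg x)]
  rcases le_total 0 x with hx | hx
  · rw [Real.sq_sqrt hx]
  · rw [Real.sqrt_eq_zero_of_nonpos hx, ENNReal.ofReal_of_nonpos hx]
    simp

lemma lintegral_ofReal_norm_sq_eq_eLpNorm_sq {α E : Type*} [MeasurableSpace α]
    [NormedAddCommGroup E] (f : α → E) (μ : Measure α) :
    ∫⁻ x, ENNReal.ofReal (‖f x‖ ^ 2) ∂μ = eLpNorm f 2 μ ^ 2 := by
  have h := eLpNorm_nnreal_pow_eq_lintegral (f := f) (μ := μ) (p := 2) two_ne_zero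
  simp only [NNReal.coe_ofNat, ENNReal.coe_ofNat, ENNReal.rpow_ofNat] at h
  rw [h]
  congr with x
  rw [ENNReal.ofReal_pow (norm_nonneg _), ofReal_norm]

lemma exists_norm_le_inner_eq {E : Type*} [NormedAddCommGroup E] [InnerProductSpace ℝ E]
    (π : E) {r : ℝ} (hr : 0 ≤ r) :
    ∃ v : E, ‖v‖ ≤ r ∧ ⟪π, v⟫ = r * ‖π‖ := by
  rcases eq_or_ne π 0 with rfl | hπ
  · exact ⟨0, by simpa using hr, by simp⟩
  have hπ' : 0 < ‖π‖ := norm_pos_iff.mpr hπ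
  refine ⟨(r / ‖π‖) • π, ?_, ?_⟩
  · rw [norm_smul, Real.norm_of_nonneg (by positivity), div_mul_cancel₀ _ hπ'.ne']
  · rw [real_inner_smul_right, real_inner_self_eq_norm_sq]
    field_simp

section Coupling

variable {E : Type*} [NormedAddCommGroup E] [InnerProductSpace ℝ E] [MeasurableSpace E]
  [BorelSpace E]

lemma integral_inner_sub_eq_integral_inner_snd_sub_fst {P Q : Measure E} {γ : Measure (E × E)}
    (hP : γ.map Prod.fst = P) (hQ : γ.map Prod.snd = Q) (π : E)
    (hπQ : Integrable (fun y => ⟪π, y⟫) Q)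
    (hγ : Integrable (fun p : E × E => p.1 - p.2) γ) :
    ∫ y, ⟪π, y⟫ ∂Q - ∫ x, ⟪π, x⟫ ∂P = ∫ p : E × E, ⟪π, p.2 - p.1⟫ ∂γ := by
  have hinner : Measurable fun x : E => ⟪π, x⟫ := by fun_prop
  have hsnd : Integrable (fun p : E × E => ⟪π, p.2⟫) γ := by
    rw [← hQ] at hπQ
    exact hπQ.comp_measurable measurable_snd
  have hfst : Integrable (fun p : E × E => ⟪π, p.1⟫) γ := by
    refine ((hγ.const_inner π).add hsnd).congr (ae_of_all _ fun p => ?_)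
    simp [inner_sub_right]
  rw [← hP, ← hQ, integral_map measurable_snd.aemeasurable hinner.aestronglyMeasurable,
    integral_map measurable_fst.aemeasurable hinner.aestronglyMeasurable,
    ← integral_sub hsnd hfst]
  simp_rw [inner_sub_right]

lemma ofReal_integral_inner_sub_le_enorm_mul_eLpNorm [SecondCountableTopology E]
    {P Q : Measure E} [IsProbabilityMeasure P]
    {γ : Measure (E × E)} (hP : γ.map Prod.fst = P) (hQ : γ.map Prod.snd = Q) (π : E)
    (hπQ : Integrable (fun y => ⟪π, y⟫) Q) :
    ENNReal.ofReal (∫ y, ⟪π, y⟫ ∂Q - ∫ x, ⟪π, x⟫ ∂P) ≤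
      ‖π‖ₑ * eLpNorm (fun p : E × E => p.1 - p.2) 2 γ := by
  have : IsProbabilityMeasure (γ.map Prod.fst) := hP ▸ ‹_›
  have := Measure.isProbabilityMeasure_of_map (μ := γ) Prod.fst
  have hL1_le_L2 : eLpNorm (fun p : E × E => p.1 - p.2) 1 γ ≤
      eLpNorm (fun p : E × E => p.1 - p.2) 2 γ :=
    eLpNorm_le_eLpNorm_of_exponent_le one_le_two (by fun_prop)
  by_cases hγ : Integrable (fun p : E × E => p.1 - p.2) γ
  · rw [integral_inner_sub_eq_integral_inner_snd_sub_fst hP hQ π hπQ hγ]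
    calc ENNReal.ofReal (∫ p : E × E, ⟪π, p.2 - p.1⟫ ∂γ)
        ≤ ∫⁻ p : E × E, ‖⟪π, p.2 - p.1⟫‖ₑ ∂γ :=
          (Real.ofReal_le_enorm _).trans (enorm_integral_le_lintegral_enorm _)
      _ ≤ ∫⁻ p : E × E, ‖π‖ₑ * ‖p.1 - p.2‖ₑ ∂γ := by
          refine lintegral_mono fun p => ?_
          rw [enorm_sub_rev p.1]
          simpa [enorm_eq_nnnorm, ← ENNReal.coe_mul] using
            nnnorm_inner_le_nnnorm (𝕜 := ℝ) π (p.2 - p.1)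
      _ = ‖π‖ₑ * eLpNorm (fun p : E × E => p.1 - p.2) 1 γ := by
          rw [lintegral_const_mul' _ _ enorm_ne_top, eLpNorm_one_eq_lintegral_enorm]
      _ ≤ ‖π‖ₑ * eLpNorm (fun p : E × E => p.1 - p.2) 2 γ := by gcongr
  · rcases eq_or_ne π 0 with rfl | hπ
    · simp
    have hL1 : eLpNorm (fun p : E × E => p.1 - p.2) 1 γ = ⊤ := by
      by_contra h
      exact hγ (memLp_one_iff_integrable.mp ⟨by fun_prop, lt_top_iff_ne_top.mpr h⟩)
    rw [hL1, top_le_iff] at hL1_le_L2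
    rw [hL1_le_L2, ENNReal.mul_top (enorm_ne_zero.mpr hπ)]
    exact le_top

end Coupling

section Transport

variable {n : ℕ}

lemma transportCost_map_le
    (c : EuclideanSpace ℝ (Fin n) → EuclideanSpace ℝ (Fin n) → ℝ≥0∞)
    (μ : Measure (EuclideanSpace ℝ (Fin n)))
    {f : EuclideanSpace ℝ (Fin n) → EuclideanSpace ℝ (Fin n)} (hf : Measurable f) :
    transportCost c (μ.map f) μ ≤ ∫⁻ x, c (f x) x ∂μ := by
  have hg : Measurable fun x => (f x, x) := hf.prodMk measurable_id
  calc transportCost c (μ.map f) μ ≤ ∫⁻ p, c p.1 p.2 ∂(μ.map fun x => (f x, x)) :=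
        iInf_le_of_le _ <| iInf_le_of_le (by rw [Measure.map_map measurable_fst hg]; rfl) <|
          iInf_le_of_le (by rw [Measure.map_map measurable_snd hg]; exact Measure.map_id) le_rfl
    _ ≤ ∫⁻ x, c (f x) x ∂μ := lintegral_map_le _ _

lemma transportCost_sq_map_sub_const_le (Q : Measure (EuclideanSpace ℝ (Fin n)))
    [IsProbabilityMeasure Q] (v : EuclideanSpace ℝ (Fin n)) :
    transportCost (fun u w => ENNReal.ofReal (‖u - w‖ ^ 2)) (Q.map (· - v)) Q ≤
      ENNReal.ofReal (‖v‖ ^ 2) :=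
  (transportCost_map_le _ Q (measurable_sub_const v)).trans_eq (by simp)

lemma integral_inner_sub_le_of_transportCost_sq_le {P Q : Measure (EuclideanSpace ℝ (Fin n))}
    [IsProbabilityMeasure P] (π : EuclideanSpace ℝ (Fin n))
    (hπQ : Integrable (fun y => ⟪π, y⟫) Q) {δ : ℝ}
    (hPQ : transportCost (fun u w => ENNReal.ofReal (‖u - w‖ ^ 2)) P Q ≤ ENNReal.ofReal δ) :
    ∫ y, ⟪π, y⟫ ∂Q - ∫ x, ⟪π, x⟫ ∂P ≤ √δ * ‖π‖ := by
  rcases eq_or_ne π 0 with rfl | hπ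
  · simp
  set a := ∫ y, ⟪π, y⟫ ∂Q - ∫ x, ⟪π, x⟫ ∂P
  -- dividing by `‖π‖ₑ` makes the bound a lower bound on each coupling's cost, so it passes
  -- to the infimum defining the transport cost
  have hcoupling : (ENNReal.ofReal a / ‖π‖ₑ) ^ 2 ≤
      transportCost (fun u w => ENNReal.ofReal (‖u - w‖ ^ 2)) P Q :=
    le_iInf₂ fun γ hP => le_iInf fun hQ => by
      refine le_of_le_of_eq ?_
        (lintegral_ofReal_norm_sq_eq_eLpNorm_sq (fun p => p.1 - p.2) γ).symm
      gcongr
      exact ENNReal.div_le_of_le_mul' (ofReal_integral_inner_sub_le_enorm_mul_eLpNorm hP hQ π hπQ)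
  have hdiv : ENNReal.ofReal a / ‖π‖ₑ ≤ ENNReal.ofReal √δ := by
    rw [← ENNReal.pow_le_pow_left_iff two_ne_zero, ENNReal.ofReal_sqrt_sq]
    exact hcoupling.trans hPQ
  rw [ENNReal.div_le_iff (enorm_ne_zero.mpr hπ) enorm_ne_top, ← ofReal_norm,
    ← ENNReal.ofReal_mul (Real.sqrt_nonneg δ)] at hdiv
  exact (ENNReal.ofReal_le_ofReal_iff (by positivity)).mp hdiv

lemma exists_transportCost_sq_le_integral_inner_eq (Q : Measure (EuclideanSpace ℝ (Fin n)))
    [IsProbabilityMeasure Q] (π : EuclideanSpace ℝ (Fin n))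
    (hπQ : Integrable (fun y => ⟪π, y⟫) Q) (δ : ℝ) :
    ∃ P : Measure (EuclideanSpace ℝ (Fin n)), IsProbabilityMeasure P ∧
      transportCost (fun u w => ENNReal.ofReal (‖u - w‖ ^ 2)) P Q ≤ ENNReal.ofReal δ ∧
      ∫ x, ⟪π, x⟫ ∂P = ∫ y, ⟪π, y⟫ ∂Q - √δ * ‖π‖ := by
  obtain ⟨v, hv, hπv⟩ := exists_norm_le_inner_eq π (Real.sqrt_nonneg δ)
  refine ⟨Q.map (· - v), Measure.isProbabilityMeasure_map (by fun_prop), ?_, ?_⟩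
  · refine (transportCost_sq_map_sub_const_le Q v).trans ?_
    rw [ENNReal.ofReal_pow (norm_nonneg v), ← ENNReal.ofReal_sqrt_sq δ]
    gcongr
  · rw [integral_map (by fun_prop) (by fun_prop)]
    simp_rw [inner_sub_right]
    rw [integral_sub hπQ (integrable_const _), integral_const, hπv]
    simp

theorem iInf_integral_inner_of_transportCost_sq_le (Q : Measure (EuclideanSpace ℝ (Fin n)))
    [IsProbabilityMeasure Q] (π : EuclideanSpace ℝ (Fin n))
    (hπQ : Integrable (fun y => ⟪π, y⟫) Q) (δ : ℝ) :
    (⨅ (P : Measure (EuclideanSpace ℝ (Fin n))) (_ : IsProbabilityMeasure P)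
        (_ : transportCost (fun u w => ENNReal.ofReal (‖u - w‖ ^ 2)) P Q ≤ ENNReal.ofReal δ),
        ((∫ x, ⟪π, x⟫ ∂P : ℝ) : EReal)) =
      ((∫ y, ⟪π, y⟫ ∂Q - √δ * ‖π‖ : ℝ) : EReal) := by
  refine le_antisymm ?_ (le_iInf₂ fun P _ => le_iInf fun hPQ => EReal.coe_le_coe_iff.mpr ?_)
  · obtain ⟨P, hP, hPQ, hπP⟩ := exists_transportCost_sq_le_integral_inner_eq Q π hπQ δ
    exact iInf₂_le_of_le P hP <| iInf_le_of_le hPQ (EReal.coe_le_coe_iff.mpr hπP.le)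
  · linarith [integral_inner_sub_le_of_transportCost_sq_le π hπQ hPQ]

end Transport

section Empirical

variable {n N : ℕ}

lemma isProbabilityMeasure_empirical (hN : 0 < N) (R : Fin N → EuclideanSpace ℝ (Fin n)) :
    IsProbabilityMeasure (empirical R) :=
  ⟨by simp [empirical, ENNReal.inv_mul_cancel (Nat.cast_ne_zero.mpr hN.ne')]⟩

lemma integrable_empirical (hN : 0 < N) (R : Fin N → EuclideanSpace ℝ (Fin n))
    (f : EuclideanSpace ℝ (Fin n) → ℝ) : Integrable f (empirical R) :=
  (integrable_finsetSum_measure.mpr fun _ _ => integrable_dirac enorm_lt_top).smul_measure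
    (ENNReal.inv_ne_top.mpr (Nat.cast_ne_zero.mpr hN.ne'))

lemma integral_empirical (R : Fin N → EuclideanSpace ℝ (Fin n))
    (f : EuclideanSpace ℝ (Fin n) → ℝ) :
    ∫ x, f x ∂(empirical R) = (N : ℝ)⁻¹ * ∑ i, f (R i) := by
  rw [empirical, integral_smul_measure,
    integral_finsetSum_measure fun _ _ => integrable_dirac enorm_lt_top]
  simp [integral_dirac]

end Empirical

theorem worst_case_mean_k2_general (n N : ℕ) (hN : 0 < N)
    (R : Fin N → EuclideanSpace ℝ (Fin n))
    (π : EuclideanSpace ℝ (Fin n)) (δ : ℝ) :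
    (⨅ (P : Measure (EuclideanSpace ℝ (Fin n)))
        (_ : IsProbabilityMeasure P)
        (_ : transportCost (fun u w => ENNReal.ofReal (‖u - w‖ ^ 2)) P (empirical R)
          ≤ ENNReal.ofReal δ),
        ((∫ x, ⟪π, x⟫ ∂P : ℝ) : EReal)) =
    (((N : ℝ)⁻¹ * ∑ i : Fin N, ⟪π, R i⟫ - Real.sqrt δ * ‖π‖ : ℝ) : EReal) := by
  have := isProbabilityMeasure_empirical hN R
  rw [iInf_integral_inner_of_transportCost_sq_le _ π (integrable_empirical hN R _) δ,
    integral_empirical]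

/-- Feasible-region duality for `κ = 2` (from the proof of Proposition 4.1):
`inf_{P : C(P,Q) ≤ δ} E_P[⟪π, R⟫] = (1/N) ∑ᵢ ⟪π, Rᵢ⟫ − √δ ‖π‖₂`,
with the cost `c(u,w) = ‖u − w‖₂²`. -/
theorem worst_case_mean_k2 (n N : ℕ) (hN : 0 < N)
    (R : Fin N → EuclideanSpace ℝ (Fin n))
    (π : EuclideanSpace ℝ (Fin n)) (δ : ℝ) (hδ : 0 < δ) :
    (⨅ (P : Measure (EuclideanSpace ℝ (Fin n)))
        (_ : IsProbabilityMeasure P)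
        (_ : transportCost (fun u w => ENNReal.ofReal (‖u - w‖ ^ 2)) P (empirical R)
          ≤ ENNReal.ofReal δ),
        ((∫ x, ⟪π, x⟫ ∂P : ℝ) : EReal)) =
    (((N : ℝ)⁻¹ * ∑ i : Fin N, ⟪π, R i⟫ - Real.sqrt δ * ‖π‖ : ℝ) : EReal) :=
  worst_case_mean_k2_general n N hN R π δ
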